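/- arXiv:2410.21114 — 2 statements merged into one kernel-verified Lean document; each statement's English description precedes it below -/
import Mathlib

section
/- (Pointwise comparison principle.) If φ₁(x) ≤ φ₂(x) for almost every x ∈ ℝ, then u₁⁻(x,t) ≤ u₂⁻(x,t) and u₁⁺(x,t) ≤ u₂⁺(x,t) for every (x,t) ∈ ℝ × (0,∞). -/
open MeasureTheory Filter Set

noncomputable def eFun (f φ : ℝ → ℝ) (u x t : ℝ) : ℝ :=
  t * (∫ s in (0:ℝ)..u, deriv (deriv f) s * (φ (x - t * deriv f s) - s))

def maxSet (f φ : ℝ → ℝ) (x t : ℝ) : Set ℝ :=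
  {w : ℝ | ∀ v : ℝ, eFun f φ v x t ≤ eFun f φ w x t}

noncomputable def uPlus (f φ : ℝ → ℝ) (x t : ℝ) : ℝ := sInf (maxSet f φ x t)

noncomputable def uMinus (f φ : ℝ → ℝ) (x t : ℝ) : ℝ := sSup (maxSet f φ x t)

open Topology

/-! The difference `E₂(u) - E₁(u)` is nondecreasing in `u`: its increment over `[a, b]` is
`∫ₐᵇ t f''(s) (φ₂ - φ₁)(x - t f'(s)) ds`, the integral of `φ₂ - φ₁ ≥ 0` over the image of `(a, b)`
under the characteristic foot `s ↦ x - t f'(s)`, which is injective because `f'` is strictly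
increasing. Adding a nondecreasing function to `E₁` can only move its largest and smallest
maximizers to the right. Since `|φ| ≤ M`, `E` is strictly smaller beyond `±M` than at `±M`, so the
sets of maximizers are nonempty and compact and these extreme maximizers exist. -/

def maximizers {α β : Type*} [LE β] (g : α → β) : Set α :=
  {w | ∀ v, g v ≤ g w}

section Exchange

variable {α β : Type*} [LinearOrder α] [AddCommGroup β] [PartialOrder β] [IsOrderedAddMonoid β]
  {g₁ g₂ : α → β}

theorem maximizers_exchange (hmono : Monotone fun u => g₂ u - g₁ u) {a b : α} (hab : a ≤ b)
    (ha : a ∈ maximizers g₂) (hb : b ∈ maximizers g₁) :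
    b ∈ maximizers g₂ ∧ a ∈ maximizers g₁ := by
  have hcross : g₂ a + g₁ b ≤ g₂ b + g₁ a := sub_le_sub_iff.1 (hmono hab)
  refine ⟨fun v => (ha v).trans ?_, fun v => (hb v).trans ?_⟩
  · exact le_of_add_le_add_right (hcross.trans (add_le_add_right (hb a) _))
  · exact le_of_add_le_add_left (hcross.trans (add_le_add_left (ha b) _))

theorem le_of_isGreatest_maximizers (hmono : Monotone fun u => g₂ u - g₁ u) {a₁ a₂ : α}
    (h₁ : IsGreatest (maximizers g₁) a₁) (h₂ : IsGreatest (maximizers g₂) a₂) : a₁ ≤ a₂ := by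
  by_contra! h
  exact h.not_ge (h₂.2 (maximizers_exchange hmono h.le h₂.1 h₁.1).1)

theorem le_of_isLeast_maximizers (hmono : Monotone fun u => g₂ u - g₁ u) {b₁ b₂ : α}
    (h₁ : IsLeast (maximizers g₁) b₁) (h₂ : IsLeast (maximizers g₂) b₂) : b₁ ≤ b₂ := by
  by_contra! h
  exact h.not_ge (h₁.2 (maximizers_exchange hmono h.le h₂.1 h₁.1).2)

end Exchange

theorem maximizers_nonempty_isCompact {α β : Type*} [LinearOrder α] [TopologicalSpace α]
    [CompactIccSpace α] [LinearOrder β] [TopologicalSpace β] [OrderClosedTopology β]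
    {g : α → β} (hg : Continuous g) {a b : α} (hab : a ≤ b) (ha : ∀ u < a, g u < g a)
    (hb : ∀ u, b < u → g u < g b) :
    (maximizers g).Nonempty ∧ IsCompact (maximizers g) := by
  have hsub : maximizers g ⊆ Icc a b := fun w hw =>
    ⟨not_lt.1 fun h => (ha w h).not_ge (hw a), not_lt.1 fun h => (hb w h).not_ge (hw b)⟩
  have hclosed : IsClosed (maximizers g) := by
    simp only [maximizers, ofPred_forall]
    exact isClosed_iInter fun v => isClosed_le continuous_const hg
  obtain ⟨w, -, hw⟩ := isCompact_Icc.exists_isMaxOn (nonempty_Icc.2 hab) hg.continuousOn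
  refine ⟨⟨w, fun v => ?_⟩, isCompact_Icc.of_isClosed_subset hclosed hsub⟩
  rcases lt_or_ge v a with hva | hav
  · exact (ha v hva).le.trans (hw (left_mem_Icc.2 hab))
  rcases le_or_gt v b with hvb | hbv
  · exact hw ⟨hav, hvb⟩
  · exact (hb v hbv).le.trans (hw (right_mem_Icc.2 hab))

theorem strictMono_of_deriv_nonneg_of_measure_zero {g : ℝ → ℝ} (hg : Differentiable ℝ g)
    (hg' : ∀ x, 0 ≤ deriv g x) (hnull : volume {x | deriv g x = 0} = 0) : StrictMono g := by
  have hmono := monotone_of_deriv_nonneg hg hg'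
  refine hmono.strictMono_of_injective fun a b heq => ?_
  wlog hab : a ≤ b generalizing a b
  · exact (this b a heq.symm (le_of_not_ge hab)).symm
  refine hab.eq_or_lt.resolve_right fun hlt => ?_
  have hconst : ∀ s ∈ Ioo a b, deriv g s = 0 := fun s hs => by
    have hloc : g =ᶠ[𝓝 s] fun _ => g a := eventually_of_mem (isOpen_Ioo.mem_nhds hs)
      fun r hr => le_antisymm (heq ▸ hmono hr.2.le) (hmono hr.1.le)
    rw [hloc.deriv_eq, deriv_const]
  have hzero : volume (Ioo a b) = 0 := measure_mono_null hconst hnull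
  rw [Real.volume_Ioo, ENNReal.ofReal_eq_zero] at hzero
  linarith

theorem intervalIntegral_pos_of_ae_pos {F : ℝ → ℝ} {a b : ℝ} (hab : a < b)
    (hF : ∀ᵐ s, s ∈ Ioo a b → 0 < F s) (hint : IntervalIntegrable F volume a b) :
    0 < ∫ s in a..b, F s := by
  rw [intervalIntegral.integral_of_le hab.le, integral_Ioc_eq_integral_Ioo,
    setIntegral_pos_iff_support_of_nonneg_ae
      ((ae_restrict_iff' measurableSet_Ioo).2 (hF.mono fun s h hs => (h hs).le))
      ((intervalIntegrable_iff_integrableOn_Ioo_of_le hab.le).1 hint)]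
  calc (0 : ENNReal) < volume (Ioo a b) := by simp [hab]
    _ ≤ volume (Function.support F ∩ Ioo a b) :=
      measure_mono_ae (hF.mono fun s h hs => ⟨(h hs).ne', hs⟩)

theorem setIntegral_abs_deriv_mul_comp_nonneg {g g' ψ : ℝ → ℝ} {s : Set ℝ}
    (hs : MeasurableSet s) (hg : ∀ x ∈ s, HasDerivWithinAt g (g' x) s x) (hinj : InjOn g s)
    (hψ : 0 ≤ᵐ[volume] ψ) : 0 ≤ ∫ x in s, |g' x| * ψ (g x) := by
  have hchange := integral_image_eq_integral_abs_deriv_smul hs hg hinj ψ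
  simp only [smul_eq_mul] at hchange
  exact hchange ▸ integral_nonneg_of_ae (ae_restrict_of_ae hψ)

noncomputable def eIntegrand (f φ : ℝ → ℝ) (x t s : ℝ) : ℝ :=
  deriv (deriv f) s * (φ (x - t * deriv f s) - s)

section Entropy

variable {f φ : ℝ → ℝ} {M x t : ℝ}

theorem intervalIntegrable_eIntegrand (hf : ContDiff ℝ 2 f) (hφ : Measurable φ)
    (hbdd : ∀ y, |φ y| ≤ M) (a b : ℝ) :
    IntervalIntegrable (eIntegrand f φ x t) volume a b := by
  have hf' : Continuous (deriv f) := hf.continuous_deriv one_le_two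
  have hf'' : Continuous (deriv (deriv f)) := (hf.deriv' (n := 1)).continuous_deriv le_rfl
  have hcomp : IntervalIntegrable (fun s => φ (x - t * deriv f s)) volume a b :=
    intervalIntegrable_iff.2 <| Measure.integrableOn_of_bounded measure_Ioc_lt_top.ne
      (hφ.comp (measurable_const.sub (measurable_const.mul hf'.measurable))).aestronglyMeasurable
      (ae_of_all _ fun s => hbdd _)
  exact (hcomp.sub intervalIntegral.intervalIntegrable_id).continuousOn_mul hf''.continuousOn

theorem eFun_sub_eFun (hf : ContDiff ℝ 2 f) (hφ : Measurable φ) (hbdd : ∀ y, |φ y| ≤ M)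
    (a b : ℝ) : eFun f φ b x t - eFun f φ a x t = t * ∫ s in a..b, eIntegrand f φ x t s := by
  rw [eFun, eFun, ← mul_sub]
  exact congrArg (t * ·) (intervalIntegral.integral_interval_sub_left
    (intervalIntegrable_eIntegrand hf hφ hbdd 0 b) (intervalIntegrable_eIntegrand hf hφ hbdd 0 a))

theorem continuous_eFun (hf : ContDiff ℝ 2 f) (hφ : Measurable φ) (hbdd : ∀ y, |φ y| ≤ M) :
    Continuous fun u => eFun f φ u x t :=
  continuous_const.mul
    (intervalIntegral.continuous_primitive (intervalIntegrable_eIntegrand hf hφ hbdd) 0)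

theorem eFun_lt_eFun_of_lt (hf : ContDiff ℝ 2 f) (hf'' : ∀ᵐ s, 0 < deriv (deriv f) s)
    (hφ : Measurable φ) (hbdd : ∀ y, |φ y| ≤ M) (ht : 0 < t) {u : ℝ} (hu : M < u) :
    eFun f φ u x t < eFun f φ M x t := by
  have hint : 0 < ∫ s in M..u, -eIntegrand f φ x t s :=
    intervalIntegral_pos_of_ae_pos hu (hf''.mono fun s hs hsI => neg_pos.2 <|
        mul_neg_of_pos_of_neg hs (by linarith [(abs_le.1 (hbdd (x - t * deriv f s))).2, hsI.1]))
      (intervalIntegrable_eIntegrand hf hφ hbdd M u).neg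
  rw [intervalIntegral.integral_neg, neg_pos] at hint
  linarith [eFun_sub_eFun hf hφ hbdd (x := x) (t := t) M u, mul_neg_of_pos_of_neg ht hint]

theorem eFun_lt_eFun_of_lt_neg (hf : ContDiff ℝ 2 f) (hf'' : ∀ᵐ s, 0 < deriv (deriv f) s)
    (hφ : Measurable φ) (hbdd : ∀ y, |φ y| ≤ M) (ht : 0 < t) {u : ℝ} (hu : u < -M) :
    eFun f φ u x t < eFun f φ (-M) x t := by
  have hint : 0 < ∫ s in u..-M, eIntegrand f φ x t s :=
    intervalIntegral_pos_of_ae_pos hu (hf''.mono fun s hs hsI =>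
        mul_pos hs (by linarith [(abs_le.1 (hbdd (x - t * deriv f s))).1, hsI.2]))
      (intervalIntegrable_eIntegrand hf hφ hbdd u (-M))
  linarith [eFun_sub_eFun hf hφ hbdd (x := x) (t := t) u (-M), mul_pos ht hint]

theorem maxSet_nonempty_isCompact (hf : ContDiff ℝ 2 f) (hf'' : ∀ᵐ s, 0 < deriv (deriv f) s)
    (hφ : Measurable φ) (hbdd : ∀ y, |φ y| ≤ M) (ht : 0 < t) :
    (maxSet f φ x t).Nonempty ∧ IsCompact (maxSet f φ x t) :=
  maximizers_nonempty_isCompact (continuous_eFun hf hφ hbdd)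
    (neg_le_self ((abs_nonneg _).trans (hbdd 0)))
    (fun _ hu => eFun_lt_eFun_of_lt_neg hf hf'' hφ hbdd ht hu)
    (fun _ hu => eFun_lt_eFun_of_lt hf hf'' hφ hbdd ht hu)

theorem monotone_eFun_sub_eFun {φ₁ φ₂ : ℝ → ℝ} {M₁ M₂ : ℝ} (hf : ContDiff ℝ 2 f)
    (hconv : ∀ s, 0 ≤ deriv (deriv f) s) (hf' : StrictMono (deriv f))
    (hφ₁ : Measurable φ₁) (hbdd₁ : ∀ y, |φ₁ y| ≤ M₁)
    (hφ₂ : Measurable φ₂) (hbdd₂ : ∀ y, |φ₂ y| ≤ M₂) (hle : φ₁ ≤ᵐ[volume] φ₂) (ht : 0 < t) :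
    Monotone fun u => eFun f φ₂ u x t - eFun f φ₁ u x t := by
  intro a b hab
  set foot : ℝ → ℝ := fun s => x - t * deriv f s
  have hfoot : ∀ s, HasDerivAt foot (-(t * deriv (deriv f) s)) s := fun s =>
    ((((hf.deriv' (n := 1)).differentiable one_ne_zero) s).hasDerivAt.const_mul t).const_sub x
  have hfoot_anti : StrictAnti foot := fun s s' hss' =>
    sub_lt_sub_left (mul_lt_mul_of_pos_left (hf' hss') ht) x
  have hsplit : (eFun f φ₂ b x t - eFun f φ₁ b x t) - (eFun f φ₂ a x t - eFun f φ₁ a x t) =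
      ∫ s in Ioo a b, |-(t * deriv (deriv f) s)| * (φ₂ - φ₁) (foot s) := by
    rw [sub_sub_sub_comm, eFun_sub_eFun hf hφ₂ hbdd₂, eFun_sub_eFun hf hφ₁ hbdd₁, ← mul_sub,
      ← intervalIntegral.integral_sub (intervalIntegrable_eIntegrand hf hφ₂ hbdd₂ a b)
        (intervalIntegrable_eIntegrand hf hφ₁ hbdd₁ a b),
      intervalIntegral.integral_of_le hab, integral_Ioc_eq_integral_Ioo, ← integral_const_mul]
    refine setIntegral_congr_fun measurableSet_Ioo fun s _ => ?_
    simp only [eIntegrand, foot, Pi.sub_apply, abs_neg, abs_of_nonneg (mul_nonneg ht.le (hconv s))]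
    ring
  have hnonneg : 0 ≤ ∫ s in Ioo a b, |-(t * deriv (deriv f) s)| * (φ₂ - φ₁) (foot s) :=
    setIntegral_abs_deriv_mul_comp_nonneg measurableSet_Ioo
      (fun s _ => (hfoot s).hasDerivWithinAt) hfoot_anti.injective.injOn
      (hle.mono fun _ hy => sub_nonneg.2 hy)
  exact sub_nonneg.1 (hsplit ▸ hnonneg)

end Entropy

/-- pointwise comparison principle. -/
theorem stmt8_comparison
    (f φ₁ φ₂ : ℝ → ℝ) (M₁ M₂ : ℝ)
    (hf : ContDiff ℝ 2 f)
    (hconv : ∀ u : ℝ, 0 ≤ deriv (deriv f) u)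
    (hdeg : volume {u : ℝ | deriv (deriv f) u = 0} = 0)
    (hφ₁meas : Measurable φ₁)
    (hφ₁bdd : ∀ x : ℝ, |φ₁ x| ≤ M₁)
    (hφ₂meas : Measurable φ₂)
    (hφ₂bdd : ∀ x : ℝ, |φ₂ x| ≤ M₂)
    (hle : ∀ᵐ x : ℝ ∂volume, φ₁ x ≤ φ₂ x) :
    ∀ x t : ℝ, 0 < t →
      uMinus f φ₁ x t ≤ uMinus f φ₂ x t ∧ uPlus f φ₁ x t ≤ uPlus f φ₂ x t := by
  intro x t ht
  have hf'' : ∀ᵐ s, 0 < deriv (deriv f) s :=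
    (measure_eq_zero_iff_ae_notMem.1 hdeg).mono fun s hs => (hconv s).lt_of_ne (Ne.symm hs)
  have hf' : StrictMono (deriv f) := strictMono_of_deriv_nonneg_of_measure_zero
    ((hf.deriv' (n := 1)).differentiable one_ne_zero) hconv hdeg
  have hmono := monotone_eFun_sub_eFun (x := x) hf hconv hf' hφ₁meas hφ₁bdd hφ₂meas hφ₂bdd hle ht
  obtain ⟨hne₁, hK₁⟩ := maxSet_nonempty_isCompact (x := x) hf hf'' hφ₁meas hφ₁bdd ht
  obtain ⟨hne₂, hK₂⟩ := maxSet_nonempty_isCompact (x := x) hf hf'' hφ₂meas hφ₂bdd ht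
  exact ⟨le_of_isGreatest_maximizers hmono (hK₁.isGreatest_sSup hne₁) (hK₂.isGreatest_sSup hne₂),
    le_of_isLeast_maximizers hmono (hK₁.isLeast_sInf hne₁) (hK₂.isLeast_sInf hne₂)⟩
end

section
/- (Existence and nonexistence of divides governed by the invariants.) Let ū_l := limsup_{x→−∞} Φ(x)/x and u̲_r := liminf_{x→+∞} Φ(x)/x. (i) If ū_l < u̲_r, then the entropy solution possesses a divide: there exist x₀, c ∈ ℝ such that 𝒰(x₀ + t·f'(c), t) = {c} for every t > 0. (ii) If ū_l > u̲_r, then there is no divide: for all x₀, c ∈ ℝ there exists t > 0 with 𝒰(x₀ + t·f'(c), t) ≠ {c}. -/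
open MeasureTheory Filter Set

noncomputable def phiInt (φ : ℝ → ℝ) (x : ℝ) : ℝ := ∫ ξ in (0:ℝ)..x, φ ξ

/-!
The substitution `y = x - t f'(s)` gives
`E(u; x, t) = Φ(x - t f'(0)) - Φ(x - t f'(u)) - t (L(u) - L(0))`, where
`L(u) = u f'(u) - f(u)` (`legendreAt f u`) is the Legendre transform of `f` at the slope
`f'(u)`. On the line `x = x₀ + t f'(c)` this reads `E(c) - E(u) = Φ(x₀ + tΔ) - Φ(x₀) - t (L(c) - L(u))` with
`Δ = f'(c) - f'(u)`, and strict convexity of `f` puts `L(c) - L(u)` strictly between `uΔ` and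
`cΔ`. Hence the line is a divide exactly when `x₀` minimises `Φ(y) - c y`: one direction is
immediate, for the other choose `t = (y - x₀) / Δ` and let `u → c`. Such a minimiser exists when
`ū_l < c < u̲_r`, because then `Φ(y) - c y → +∞` as `|y| → ∞`; conversely a minimiser forces
`ū_l ≤ c ≤ u̲_r`.
-/

open Topology

theorem strictMono_of_deriv_nonneg_of_volume_deriv_eq_zero {g : ℝ → ℝ}
    (hg : Differentiable ℝ g) (hg' : ∀ u, 0 ≤ deriv g u)
    (hnull : volume {u | deriv g u = 0} = 0) : StrictMono g := by
  have hmono : Monotone g := monotone_of_deriv_nonneg hg hg'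
  refine hmono.strictMono_of_injective fun a b hab => ?_
  by_contra hne
  wlog hlt : a < b generalizing a b
  · exact this b a hab.symm (Ne.symm hne) ((Ne.lt_or_gt hne).resolve_left hlt)
  have hconst : ∀ y ∈ Ioo a b, g y = g a := fun y hy =>
    le_antisymm (hab ▸ hmono hy.2.le) (hmono hy.1.le)
  have hsub : Ioo a b ⊆ {u | deriv g u = 0} := fun z hz => by
    have hev : g =ᶠ[𝓝 z] fun _ => g a :=
      eventually_of_mem (Ioo_mem_nhds hz.1 hz.2) hconst
    simpa using hev.deriv_eq
  have := measure_mono (μ := volume) hsub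
  rw [hnull, Real.volume_Ioo, nonpos_iff_eq_zero, ENNReal.ofReal_eq_zero] at this
  linarith

theorem intervalIntegrable_of_abs_le {φ : ℝ → ℝ} {M : ℝ} (hφ : Measurable φ)
    (hM : ∀ x, |φ x| ≤ M) (a b : ℝ) : IntervalIntegrable φ volume a b :=
  intervalIntegrable_const.mono_fun' hφ.aestronglyMeasurable (ae_of_all _ hM)

section StrictlyConvex

variable {f : ℝ → ℝ}

theorem add_deriv_mul_sub_lt_of_strictMono_deriv (hfd : Differentiable ℝ f)
    (hf' : StrictMono (deriv f)) {u c : ℝ} (h : u ≠ c) : f u + deriv f u * (c - u) < f c := by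
  have hconv := hf'.strictConvexOn_univ_of_deriv hfd.continuous
  rcases h.lt_or_gt with h | h
  · have := hconv.deriv_lt_slope (mem_univ u) (mem_univ c) h (hfd u)
    rw [slope_def_field, lt_div_iff₀ (sub_pos.2 h)] at this
    linarith
  · have := hconv.slope_lt_deriv (mem_univ c) (mem_univ u) h (hfd u)
    rw [slope_def_field, div_lt_iff₀ (sub_pos.2 h)] at this
    linarith

noncomputable def legendreAt (f : ℝ → ℝ) (u : ℝ) : ℝ := u * deriv f u - f u

theorem hasDerivAt_legendreAt (hfd : Differentiable ℝ f) (hfd' : Differentiable ℝ (deriv f))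
    (u : ℝ) : HasDerivAt (legendreAt f) (u * deriv (deriv f) u) u :=
  (((hasDerivAt_id u).mul (hfd' u).hasDerivAt).sub (hfd u).hasDerivAt).congr_deriv (by simp)

theorem legendreAt_sub_lt (hfd : Differentiable ℝ f) (hf' : StrictMono (deriv f)) {u c : ℝ}
    (h : u ≠ c) : legendreAt f c - legendreAt f u < c * (deriv f c - deriv f u) := by
  have := add_deriv_mul_sub_lt_of_strictMono_deriv hfd hf' h
  simp only [legendreAt]
  linarith

theorem mul_le_legendreAt_sub (hfd : Differentiable ℝ f) (hf' : StrictMono (deriv f))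
    (u c : ℝ) : u * (deriv f c - deriv f u) ≤ legendreAt f c - legendreAt f u := by
  rcases eq_or_ne u c with rfl | h
  · simp
  have := add_deriv_mul_sub_lt_of_strictMono_deriv hfd hf' h.symm
  simp only [legendreAt]
  linarith

end StrictlyConvex

theorem eFun_eq {f φ : ℝ → ℝ} {M : ℝ} (hf : ContDiff ℝ 2 f)
    (hconv : ∀ u, 0 ≤ deriv (deriv f) u) (hφ : Measurable φ) (hM : ∀ x, |φ x| ≤ M)
    {t : ℝ} (ht : 0 ≤ t) (u x : ℝ) :
    eFun f φ u x t = phiInt φ (x - t * deriv f 0) - phiInt φ (x - t * deriv f u)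
      - t * (legendreAt f u - legendreAt f 0) := by
  have hfd := hf.differentiable two_ne_zero
  have hfd' := hf.differentiable_deriv_two
  have hf2 := (hf.deriv' (n := 1)).continuous_deriv_one
  set g : ℝ → ℝ := fun s => x - t * deriv f s
  have hg : ∀ s, HasDerivAt g (-(t * deriv (deriv f) s)) s := fun s =>
    ((hfd' s).hasDerivAt.const_mul t).const_sub x
  have hgc : Continuous g := continuous_const.sub (continuous_const.mul hfd'.continuous)
  have hsubst : ∫ s in 0..u, (φ ∘ g) s * -(t * deriv (deriv f) s) = ∫ y in g 0..g u, φ y :=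
    intervalIntegral.integral_comp_mul_deriv_of_deriv_nonpos hgc.continuousOn
      (fun s _ => hg s) (fun s _ => neg_nonpos.2 (mul_nonneg ht (hconv s)))
  have hΦ : ∫ y in g 0..g u, φ y = phiInt φ (g u) - phiInt φ (g 0) :=
    (intervalIntegral.integral_interval_sub_left (intervalIntegrable_of_abs_le hφ hM _ _)
      (intervalIntegrable_of_abs_le hφ hM _ _)).symm
  have hint' : IntervalIntegrable (fun s => s * deriv (deriv f) s) volume 0 u :=
    (continuous_id.mul hf2).intervalIntegrable 0 u
  have hleg : ∫ s in 0..u, s * deriv (deriv f) s = legendreAt f u - legendreAt f 0 :=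
    intervalIntegral.integral_eq_sub_of_hasDerivAt (fun s _ => hasDerivAt_legendreAt hfd hfd' s)
      hint'
  have hint : IntervalIntegrable (fun s => deriv (deriv f) s * φ (g s)) volume 0 u :=
    (intervalIntegrable_of_abs_le (hφ.comp hgc.measurable) (fun s => hM (g s)) 0 u
      ).continuousOn_mul hf2.continuousOn
  have hpull : t * ∫ s in 0..u, deriv (deriv f) s * φ (g s)
      = -∫ s in 0..u, (φ ∘ g) s * -(t * deriv (deriv f) s) := by
    rw [← intervalIntegral.integral_const_mul, ← intervalIntegral.integral_neg]
    congr 1; ext s; simp only [Function.comp]; ring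
  have hsplit : ∫ s in 0..u, deriv (deriv f) s * (φ (g s) - s)
      = (∫ s in 0..u, deriv (deriv f) s * φ (g s)) - ∫ s in 0..u, s * deriv (deriv f) s := by
    rw [← intervalIntegral.integral_sub hint hint']
    congr 1; ext s; ring
  rw [eFun, hsplit, mul_sub, hpull, hsubst, hΦ, hleg]
  ring

section RatioAtInfinity

variable {g : ℝ → ℝ} {M c : ℝ}

theorem exists_forall_sub_mul_le_of_limsup_lt_liminf (hg : Continuous g)
    (hb : ∀ x, |g x / x| ≤ M) (hbot : limsup (fun x => g x / x) atBot < c)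
    (htop : c < liminf (fun x => g x / x) atTop) :
    ∃ x₀, ∀ y, g x₀ - c * x₀ ≤ g y - c * y := by
  obtain ⟨c₁, hc₁, hc₁c⟩ := exists_between hbot
  obtain ⟨c₂, hcc₂, hc₂⟩ := exists_between htop
  have hbot' : ∀ᶠ x in atBot, g x / x < c₁ :=
    eventually_lt_of_limsup_lt hc₁ (isBoundedUnder_of ⟨M, fun x => (abs_le.1 (hb x)).2⟩)
  have htop' : ∀ᶠ x in atTop, c₂ < g x / x :=
    eventually_lt_of_lt_liminf hc₂ (isBoundedUnder_of ⟨-M, fun x => (abs_le.1 (hb x)).1⟩)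
  refine Continuous.exists_forall_le (f := fun x => g x - c * x) (by fun_prop) ?_
  rw [cocompact_eq_atBot_atTop]
  refine Tendsto.sup (tendsto_atTop_mono' _ ?_ (tendsto_id.const_mul_atBot_of_neg
    (sub_neg.2 hc₁c))) (tendsto_atTop_mono' _ ?_ (tendsto_id.const_mul_atTop (sub_pos.2 hcc₂)))
  · filter_upwards [hbot', eventually_lt_atBot 0] with x hx hx0
    rw [div_lt_iff_of_neg hx0] at hx
    rw [id]
    linarith
  · filter_upwards [htop', eventually_gt_atTop 0] with x hx hx0
    rw [lt_div_iff₀ hx0] at hx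
    rw [id]
    linarith

theorem le_liminf_div_of_forall_sub_mul_le (hb : ∀ x, |g x / x| ≤ M) {x₀ : ℝ}
    (hmin : ∀ y, g x₀ - c * x₀ ≤ g y - c * y) : c ≤ liminf (fun x => g x / x) atTop := by
  set K := g x₀ - c * x₀
  have hlim : Tendsto (fun x => c + K / x) atTop (𝓝 c) := by
    have hK : Tendsto (fun x : ℝ => K / x) atTop (𝓝 0) := tendsto_const_nhds.div_atTop tendsto_id
    simpa using hK.const_add c
  have hle : ∀ᶠ x in atTop, c + K / x ≤ g x / x := by
    filter_upwards [eventually_gt_atTop 0] with x hx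
    rw [le_div_iff₀ hx, add_mul, div_mul_cancel₀ _ hx.ne']
    linarith [hmin x]
  calc c = liminf (fun x => c + K / x) atTop := hlim.liminf_eq.symm
    _ ≤ liminf (fun x => g x / x) atTop := liminf_le_liminf hle hlim.isBoundedUnder_ge
        (isBoundedUnder_of ⟨M, fun x => (abs_le.1 (hb x)).2⟩).isCoboundedUnder_ge

theorem limsup_div_le_of_forall_sub_mul_le (hb : ∀ x, |g x / x| ≤ M) {x₀ : ℝ}
    (hmin : ∀ y, g x₀ - c * x₀ ≤ g y - c * y) : limsup (fun x => g x / x) atBot ≤ c := by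
  set K := g x₀ - c * x₀
  have hlim : Tendsto (fun x => c + K / x) atBot (𝓝 c) := by
    have hK : Tendsto (fun x : ℝ => K / x) atBot (𝓝 0) := tendsto_const_nhds.div_atBot tendsto_id
    simpa using hK.const_add c
  have hle : ∀ᶠ x in atBot, g x / x ≤ c + K / x := by
    filter_upwards [eventually_lt_atBot 0] with x hx
    rw [div_le_iff_of_neg hx, add_mul, div_mul_cancel₀ _ hx.ne]
    linarith [hmin x]
  calc limsup (fun x => g x / x) atBot ≤ limsup (fun x => c + K / x) atBot :=
        limsup_le_limsup hle
          (isBoundedUnder_of ⟨-M, fun x => (abs_le.1 (hb x)).1⟩).isCoboundedUnder_le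
          hlim.isBoundedUnder_le
    _ = c := hlim.limsup_eq

end RatioAtInfinity

section PhiInt

variable {φ : ℝ → ℝ} {M : ℝ}

theorem continuous_phiInt (hφ : Measurable φ) (hM : ∀ x, |φ x| ≤ M) : Continuous (phiInt φ) :=
  intervalIntegral.continuous_primitive (intervalIntegrable_of_abs_le hφ hM) 0

theorem abs_phiInt_div_le (hM : ∀ x, |φ x| ≤ M) (x : ℝ) : |phiInt φ x / x| ≤ M := by
  have hint : |phiInt φ x| ≤ M * |x| := by
    simpa [phiInt] using intervalIntegral.norm_integral_le_of_norm_le_const (a := 0) (b := x)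
      fun y _ => (Real.norm_eq_abs (φ y)).trans_le (hM y)
  rcases eq_or_ne x 0 with rfl | hx
  · simpa using (abs_nonneg _).trans (hM 0)
  · rw [abs_div, div_le_iff₀ (abs_pos.2 hx)]
    exact hint

end PhiInt

section Divide

variable {f φ : ℝ → ℝ} {M : ℝ}

theorem eFun_sub_eFun_along_line (hf : ContDiff ℝ 2 f) (hconv : ∀ u, 0 ≤ deriv (deriv f) u)
    (hφ : Measurable φ) (hM : ∀ x, |φ x| ≤ M) {t : ℝ} (ht : 0 ≤ t) (x₀ c u : ℝ) :
    eFun f φ c (x₀ + t * deriv f c) t - eFun f φ u (x₀ + t * deriv f c) t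
      = phiInt φ (x₀ + t * (deriv f c - deriv f u)) - phiInt φ x₀
        - t * (legendreAt f c - legendreAt f u) := by
  rw [eFun_eq hf hconv hφ hM ht, eFun_eq hf hconv hφ hM ht,
    show x₀ + t * deriv f c - t * deriv f c = x₀ by ring,
    show x₀ + t * deriv f c - t * deriv f u = x₀ + t * (deriv f c - deriv f u) by ring]
  ring

theorem maxSet_eq_singleton_of_forall_sub_mul_le (hf : ContDiff ℝ 2 f)
    (hconv : ∀ u, 0 ≤ deriv (deriv f) u) (hf' : StrictMono (deriv f)) (hφ : Measurable φ)
    (hM : ∀ x, |φ x| ≤ M) {x₀ c : ℝ}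
    (hmin : ∀ y, phiInt φ x₀ - c * x₀ ≤ phiInt φ y - c * y) {t : ℝ} (ht : 0 < t) :
    maxSet f φ (x₀ + t * deriv f c) t = {c} := by
  have hlt : ∀ u ≠ c, eFun f φ u (x₀ + t * deriv f c) t < eFun f φ c (x₀ + t * deriv f c) t := by
    intro u hu
    have hdiff := eFun_sub_eFun_along_line hf hconv hφ hM ht.le x₀ c u
    have hΦ := hmin (x₀ + t * (deriv f c - deriv f u))
    have hL := mul_lt_mul_of_pos_left
      (legendreAt_sub_lt (hf.differentiable two_ne_zero) hf' hu) ht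
    linarith
  ext w
  refine ⟨fun hw => by_contra fun hne => (hlt w hne).not_ge (hw c), ?_⟩
  rintro rfl v
  rcases eq_or_ne v w with rfl | hv
  · exact le_rfl
  · exact (hlt v hv).le

theorem mul_le_phiInt_sub_of_mem_maxSet (hf : ContDiff ℝ 2 f)
    (hconv : ∀ u, 0 ≤ deriv (deriv f) u) (hf' : StrictMono (deriv f)) (hφ : Measurable φ)
    (hM : ∀ x, |φ x| ≤ M) {x₀ c t : ℝ} (ht : 0 < t) (hc : c ∈ maxSet f φ (x₀ + t * deriv f c) t)
    (u : ℝ) :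
    u * (t * (deriv f c - deriv f u))
      ≤ phiInt φ (x₀ + t * (deriv f c - deriv f u)) - phiInt φ x₀ := by
  have hdiff := eFun_sub_eFun_along_line hf hconv hφ hM ht.le x₀ c u
  have hL := mul_le_mul_of_nonneg_left
    (mul_le_legendreAt_sub (hf.differentiable two_ne_zero) hf' u c) ht.le
  linarith [hc u]

theorem forall_sub_mul_le_of_mem_maxSet (hf : ContDiff ℝ 2 f)
    (hconv : ∀ u, 0 ≤ deriv (deriv f) u) (hf' : StrictMono (deriv f)) (hφ : Measurable φ)
    (hM : ∀ x, |φ x| ≤ M) {x₀ c : ℝ} (hdiv : ∀ t, 0 < t → c ∈ maxSet f φ (x₀ + t * deriv f c) t)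
    (y : ℝ) : phiInt φ x₀ - c * x₀ ≤ phiInt φ y - c * y := by
  have hline : ∀ u, 0 < (y - x₀) / (deriv f c - deriv f u) →
      u * (y - x₀) ≤ phiInt φ y - phiInt φ x₀ := by
    intro u ht
    have hΔ : deriv f c - deriv f u ≠ 0 := fun h => by simp [h] at ht
    have := mul_le_phiInt_sub_of_mem_maxSet hf hconv hf' hφ hM ht (hdiv _ ht) u
    rwa [div_mul_cancel₀ _ hΔ, add_sub_cancel] at this
  have hcont : Continuous fun u : ℝ => u * (y - x₀) := continuous_mul_const _
  suffices c * (y - x₀) ≤ phiInt φ y - phiInt φ x₀ by linarith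
  rcases lt_trichotomy y x₀ with hy | rfl | hy
  · refine le_of_tendsto (hcont.tendsto c |>.mono_left nhdsWithin_le_nhds)
      (eventually_nhdsWithin_of_forall (s := Ioi c) fun u hu => hline u ?_)
    exact div_pos_of_neg_of_neg (sub_neg.2 hy) (sub_neg.2 (hf' hu))
  · simp
  · refine le_of_tendsto (hcont.tendsto c |>.mono_left nhdsWithin_le_nhds)
      (eventually_nhdsWithin_of_forall (s := Iio c) fun u hu => hline u ?_)
    exact div_pos (sub_pos.2 hy) (sub_pos.2 (hf' hu))

end Divide

/-- existence and nonexistence of divides governed by the invariants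
`ū_l` and `u̲_r`. -/
theorem stmt13_divides_and_invariants
    (f φ : ℝ → ℝ) (M : ℝ)
    (hf : ContDiff ℝ 2 f)
    (hconv : ∀ u : ℝ, 0 ≤ deriv (deriv f) u)
    (hdeg : volume {u : ℝ | deriv (deriv f) u = 0} = 0)
    (hφmeas : Measurable φ)
    (hφbdd : ∀ x : ℝ, |φ x| ≤ M) :
    (Filter.limsup (fun x : ℝ => phiInt φ x / x) Filter.atBot
        < Filter.liminf (fun x : ℝ => phiInt φ x / x) Filter.atTop →
      ∃ x₀ c : ℝ, ∀ t : ℝ, 0 < t → maxSet f φ (x₀ + t * deriv f c) t = {c}) ∧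
    (Filter.liminf (fun x : ℝ => phiInt φ x / x) Filter.atTop
        < Filter.limsup (fun x : ℝ => phiInt φ x / x) Filter.atBot →
      ∀ x₀ c : ℝ, ∃ t : ℝ, 0 < t ∧ maxSet f φ (x₀ + t * deriv f c) t ≠ {c}) := by
  have hf' : StrictMono (deriv f) := strictMono_of_deriv_nonneg_of_volume_deriv_eq_zero
    hf.differentiable_deriv_two hconv hdeg
  have hb := abs_phiInt_div_le hφbdd
  refine ⟨fun hlt => ?_, fun hgt x₀ c => ?_⟩
  · obtain ⟨c, hLc, hcR⟩ := exists_between hlt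
    obtain ⟨x₀, hx₀⟩ := exists_forall_sub_mul_le_of_limsup_lt_liminf
      (continuous_phiInt hφmeas hφbdd) hb hLc hcR
    exact ⟨x₀, c, fun t ht =>
      maxSet_eq_singleton_of_forall_sub_mul_le hf hconv hf' hφmeas hφbdd hx₀ ht⟩
  · by_contra! hdiv
    have hx₀ := forall_sub_mul_le_of_mem_maxSet hf hconv hf' hφmeas hφbdd
      fun t ht => (hdiv t ht).symm ▸ mem_singleton c
    exact (hgt.trans_le (limsup_div_le_of_forall_sub_mul_le hb hx₀)).not_ge
      (le_liminf_div_of_forall_sub_mul_le hb hx₀)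
end
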